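/- arXiv:1909.11594 — 3 statements merged into one kernel-verified Lean document; each statement's English description precedes it below -/
import Mathlib

section
/- The operator norm of the Laplacian operator L equals √(2p), i.e., sup over unit vectors x ∈ ℝ^{p(p-1)/2} of ‖Lx‖_F equals √(2p), for p ≥ 2. -/
open Matrix Finset

open Finset in
/-- Index map of Definition 1 (0-indexed): the pair `(i, j)` with `i > j`
(0-indexed) is sent to `k = (i - j - 1) + j*(2p - j - 1)/2`, which is the
0-indexed version of `k = (i' - j') + (j' - 1)*(2p - j')/2` for 1-indexed
`i' = i + 1`, `j' = j + 1`. -/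
def lapIdx (p i j : ℕ) : ℕ := (i - j - 1) + j * (2 * p - j - 1) / 2

/-- Extension of `w : Fin (p(p-1)/2) → ℝ` to `ℕ` by zero. -/
def wExt (p : ℕ) (w : Fin (p * (p - 1) / 2) → ℝ) (k : ℕ) : ℝ :=
  if h : k < p * (p - 1) / 2 then w ⟨k, h⟩ else 0

/-- The graph Laplacian operator `L` of Definition 1:
`[Lw]_{ij} = -w_{lapIdx p i j}` for `i > j`, symmetric for `i < j`, and
`[Lw]_{ii} = -∑_{j ≠ i} [Lw]_{ij}`. -/
def Lop (p : ℕ) (w : Fin (p * (p - 1) / 2) → ℝ) : Matrix (Fin p) (Fin p) ℝ :=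
  Matrix.of fun i j =>
    if i = j then
      ∑ l ∈ Finset.univ.filter (fun l => l ≠ i),
        wExt p w (lapIdx p (max (i : ℕ) (l : ℕ)) (min (i : ℕ) (l : ℕ)))
    else - wExt p w (lapIdx p (max (i : ℕ) (j : ℕ)) (min (i : ℕ) (j : ℕ)))

def gS (p j : ℕ) : ℕ := ∑ t ∈ Finset.range j, (p - 1 - t)

lemma two_gS (p : ℕ) : ∀ j, j ≤ p → 2 * gS p j = j * (2 * p - j - 1) := by
  intro j
  induction j with
  | zero => simp [gS]
  | succ n ih =>
    intro h
    obtain ⟨m, rfl⟩ : ∃ m, p = n + 1 + m := ⟨p - (n + 1), by omega⟩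
    have h1 := ih (by omega)
    have e1 : 2 * (n + 1 + m) - n - 1 = n + 2 * m + 1 := by omega
    have e2 : 2 * (n + 1 + m) - (n + 1) - 1 = n + 2 * m := by omega
    have e3 : (n + 1 + m) - 1 - n = m := by omega
    rw [gS, Finset.sum_range_succ, ← gS, e3, e2]
    rw [e1] at h1
    have key : (n + 1) * (n + 2 * m) = n * (n + 2 * m + 1) + 2 * m := by ring
    rw [key, ← h1]
    ring

lemma gS_mono (p : ℕ) : Monotone (gS p) := fun _ _ h =>
  Finset.sum_le_sum_of_subset (Finset.range_subset_range.2 h)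

lemma lapIdx_eq (p i j : ℕ) (hj : j ≤ p) : lapIdx p i j = (i - j - 1) + gS p j := by
  unfold lapIdx
  congr 1
  rw [← two_gS p j hj, Nat.mul_div_cancel_left _ (by norm_num)]

lemma N_eq_gS (p : ℕ) : p * (p - 1) / 2 = gS p p := by
  have h := two_gS p p le_rfl
  have e : 2 * p - p - 1 = p - 1 := by omega
  rw [e] at h
  rw [← h, Nat.mul_div_cancel_left _ (by norm_num)]

lemma lapIdx_lt (p i j : ℕ) (hij : j < i) (hi : i < p) :
    lapIdx p i j < p * (p - 1) / 2 := by
  rw [lapIdx_eq p i j (by omega), N_eq_gS]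
  have h1 : gS p (j + 1) = gS p j + (p - 1 - j) := Finset.sum_range_succ _ j
  have h2 : gS p (j + 1) ≤ gS p p := gS_mono p (by omega)
  omega

lemma lapIdx_inj (p : ℕ) {i1 j1 i2 j2 : ℕ} (h1 : j1 < i1) (hi1 : i1 < p)
    (h2 : j2 < i2) (hi2 : i2 < p) (he : lapIdx p i1 j1 = lapIdx p i2 j2) :
    i1 = i2 ∧ j1 = j2 := by
  have key : ∀ {a b c d : ℕ}, b < a → a < p → d < c → c < p →
      lapIdx p a b = lapIdx p c d → b ≤ d → b = d := by
    intro a b c d hba hap hdc hcp heq hbd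
    by_contra hne
    have hlt : b + 1 ≤ d := by omega
    have hs : gS p (b + 1) = gS p b + (p - 1 - b) := Finset.sum_range_succ _ b
    have e1 : lapIdx p a b = (a - b - 1) + gS p b := lapIdx_eq p a b (by omega)
    have e2 : lapIdx p c d = (c - d - 1) + gS p d := lapIdx_eq p c d (by omega)
    have hmono := gS_mono p hlt
    omega
  have hj : j1 = j2 := by
    rcases le_total j1 j2 with h | h
    · exact key h1 hi1 h2 hi2 he h
    · exact (key h2 hi2 h1 hi1 he.symm h).symm
  subst hj
  refine ⟨?_, rfl⟩
  rw [lapIdx_eq p i1 j1 (by omega), lapIdx_eq p i2 j1 (by omega)] at he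
  omega


set_option maxHeartbeats 1000000 in
/-- Lemma 2: the operator norm of `L` equals `√(2p)`, i.e.
`√(2p)` is the greatest value of the Frobenius norm `‖Lx‖_F` over Euclidean
unit vectors `x ∈ ℝ^{p(p-1)/2}`. -/
theorem lop_operator_norm (p : ℕ) (hp : 2 ≤ p) :
    IsGreatest
      {r : ℝ | ∃ x : Fin (p * (p - 1) / 2) → ℝ,
        Real.sqrt (∑ k, (x k) ^ 2) = 1 ∧
        r = Real.sqrt (∑ i : Fin p, ∑ j : Fin p, (Lop p x i j) ^ 2)}
      (Real.sqrt (2 * p)) := by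
  have hN2 : 2 * (p * (p - 1) / 2) = p * (p - 1) := by
    rw [N_eq_gS, two_gS p p le_rfl]
    congr 1
    omega
  have hNpos : 0 < p * (p - 1) / 2 := by
    have h2 : 2 * 1 ≤ p * (p - 1) := Nat.mul_le_mul hp (by omega)
    rw [← hN2] at h2
    omega
  have hNne : ((p * (p - 1) / 2 : ℕ) : ℝ) ≠ 0 := Nat.cast_ne_zero.mpr hNpos.ne'
  have hQ : ((p - 1 : ℕ) : ℝ) + 1 = (p : ℝ) := by
    have : (p - 1) + 1 = p := by omega
    exact_mod_cast this
  have hNR : 2 * ((p * (p - 1) / 2 : ℕ) : ℝ) = (p : ℝ) * ((p - 1 : ℕ) : ℝ) := by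
    exact_mod_cast hN2
  constructor
  · -- membership
    set c : ℝ := Real.sqrt (((p * (p - 1) / 2 : ℕ) : ℝ)⁻¹) with hc
    have hc2 : c ^ 2 = (((p * (p - 1) / 2 : ℕ) : ℝ))⁻¹ := Real.sq_sqrt (by positivity)
    refine ⟨fun _ => c, ?_, ?_⟩
    · rw [Real.sqrt_eq_one]
      rw [Finset.sum_const, card_univ, Fintype.card_fin, nsmul_eq_mul, hc2]
      exact mul_inv_cancel₀ hNne
    · have hw : ∀ a b : Fin p, a ≠ b →
          wExt p (fun _ => c) (lapIdx p (max (a : ℕ) (b : ℕ)) (min (a : ℕ) (b : ℕ))) = c := by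
        intro a b hab
        have hne : (a : ℕ) ≠ (b : ℕ) := fun h => hab (Fin.ext h)
        have ha := a.isLt
        have hb := b.isLt
        rw [wExt, dif_pos (lapIdx_lt p _ _ (by omega) (by omega))]
      have hoff : ∀ i j : Fin p, i ≠ j → Lop p (fun _ => c) i j = -c := by
        intro i j hij
        rw [Lop]
        simp only [Matrix.of_apply, if_neg hij]
        rw [hw i j hij]
      have hdiag : ∀ i : Fin p, Lop p (fun _ => c) i i = ((p - 1 : ℕ) : ℝ) * c := by
        intro i
        rw [Lop]
        simp only [Matrix.of_apply, eq_self_iff_true, if_true]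
        rw [Finset.sum_congr rfl (fun l hl => hw i l (Ne.symm ((Finset.mem_filter.mp hl).2))),
          Finset.sum_const, Finset.filter_ne', Finset.card_erase_of_mem (mem_univ i),
          card_univ, Fintype.card_fin, nsmul_eq_mul]
      have hrow : ∀ i : Fin p, ∑ j, (Lop p (fun _ => c) i j) ^ 2 =
          ((p - 1 : ℕ) : ℝ) ^ 2 * c ^ 2 + ((p - 1 : ℕ) : ℝ) * c ^ 2 := by
        intro i
        rw [← Finset.add_sum_erase _ _ (mem_univ i)]
        congr 1
        · rw [hdiag i]; ring
        · rw [Finset.sum_congr rfl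
            (fun j hj => by rw [hoff i j (Ne.symm (Finset.ne_of_mem_erase hj)), neg_sq]),
            Finset.sum_const, Finset.card_erase_of_mem (mem_univ i),
            card_univ, Fintype.card_fin, nsmul_eq_mul]
      rw [Finset.sum_congr rfl (fun i _ => hrow i), Finset.sum_const, card_univ,
        Fintype.card_fin, nsmul_eq_mul, hc2]
      congr 1
      have ha : ((p - 1 : ℕ) : ℝ) = (p : ℝ) - 1 := by linarith [hQ]
      have hn : ((p * (p - 1) / 2 : ℕ) : ℝ) = (p : ℝ) * ((p : ℝ) - 1) / 2 := by
        rw [ha] at hNR; linarith [hNR]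
      have hp2 : (2 : ℝ) ≤ (p : ℝ) := by exact_mod_cast hp
      have hp0 : (p : ℝ) ≠ 0 := by linarith
      have hp1 : (p : ℝ) - 1 ≠ 0 := by intro h; linarith
      rw [ha, hn]
      field_simp
      ring
  · -- upper bound
    rintro r ⟨x, hx1, rfl⟩
    have hxsum : ∑ k, (x k) ^ 2 = 1 := Real.sqrt_eq_one.mp hx1
    apply Real.sqrt_le_sqrt
    set v : Fin p → Fin p → ℝ :=
      fun i j => wExt p x (lapIdx p (max (i : ℕ) (j : ℕ)) (min (i : ℕ) (j : ℕ))) with hv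
    have hvsym : ∀ i j, v i j = v j i := by
      intro i j
      simp only [hv, max_comm, min_comm]
    set A : Fin p → ℝ := fun i => ∑ j ∈ univ.erase i, (v i j) ^ 2 with hA
    have hrow : ∀ i : Fin p, ∑ j, (Lop p x i j) ^ 2 ≤ (((p - 1 : ℕ) : ℝ) + 1) * A i := by
      intro i
      rw [← Finset.add_sum_erase _ _ (mem_univ i)]
      have hd : Lop p x i i = ∑ l ∈ univ.erase i, v i l := by
        rw [Lop]
        simp only [Matrix.of_apply, eq_self_iff_true, if_true]
        rw [Finset.filter_ne']
      have hcs : (Lop p x i i) ^ 2 ≤ ((p - 1 : ℕ) : ℝ) * A i := by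
        rw [hd, hA]
        have h := sq_sum_le_card_mul_sum_sq (s := univ.erase i) (f := v i)
        rwa [Finset.card_erase_of_mem (mem_univ i), card_univ, Fintype.card_fin] at h
      have hoffsq : ∑ j ∈ univ.erase i, (Lop p x i j) ^ 2 = A i := by
        refine Finset.sum_congr rfl fun j hj => ?_
        rw [Lop]
        simp only [Matrix.of_apply, if_neg (Ne.symm (Finset.ne_of_mem_erase hj))]
        rw [neg_sq]
      rw [hoffsq]
      linarith [hcs]
    have hsumA : ∑ i, A i ≤ 2 := by
      set G : Fin p → Fin p → ℝ := fun i j => if (j : ℕ) < (i : ℕ) then (v i j) ^ 2 else 0 with hG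
      set H : Fin p → Fin p → ℝ := fun i j => if (i : ℕ) < (j : ℕ) then (v i j) ^ 2 else 0 with hH
      have hAi : ∀ i, A i = (∑ j, G i j) + (∑ j, H i j) := by
        intro i
        rw [← Finset.sum_add_distrib, hA]
        rw [← Finset.sum_erase (s := univ) (f := fun j => G i j + H i j) (a := i)
          (by simp [hG, hH])]
        refine Finset.sum_congr rfl fun j hj => ?_
        have hne : (j : ℕ) ≠ (i : ℕ) := fun h => (Finset.ne_of_mem_erase hj) (Fin.ext h)
        simp only [hG, hH]
        rcases lt_or_gt_of_ne hne with h | h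
        · rw [if_pos h, if_neg (by omega), add_zero]
        · rw [if_neg (by omega), if_pos h, zero_add]
      have hHG : ∑ i, ∑ j, H i j = ∑ i, ∑ j, G i j := by
        rw [Finset.sum_comm]
        refine Finset.sum_congr rfl fun i _ => Finset.sum_congr rfl fun j _ => ?_
        simp only [hG, hH]
        rcases lt_or_ge (j : ℕ) (i : ℕ) with h | h
        · rw [if_pos h, if_pos h, hvsym]
        · rw [if_neg (not_lt.mpr h), if_neg (not_lt.mpr h)]
      have hGbound : ∑ i, ∑ j, G i j ≤ 1 := by
        have hstep : ∑ i, ∑ j, G i j =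
            ∑ q ∈ (univ : Finset (Fin p × Fin p)).filter (fun q => (q.2 : ℕ) < (q.1 : ℕ)),
              (v q.1 q.2) ^ 2 := by
          rw [Finset.sum_filter, Fintype.sum_prod_type]
        set e : Fin p × Fin p → Fin (p * (p - 1) / 2) := fun q =>
          if h : (q.2 : ℕ) < (q.1 : ℕ) then
            ⟨lapIdx p (q.1 : ℕ) (q.2 : ℕ), lapIdx_lt p _ _ h q.1.isLt⟩
          else ⟨0, hNpos⟩ with he
        have hterm : ∀ q ∈ (univ : Finset (Fin p × Fin p)).filter
            (fun q => (q.2 : ℕ) < (q.1 : ℕ)), (v q.1 q.2) ^ 2 = (x (e q)) ^ 2 := by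
          intro q hq
          have hlt : (q.2 : ℕ) < (q.1 : ℕ) := (Finset.mem_filter.mp hq).2
          simp only [hv, he, dif_pos hlt, max_eq_left hlt.le, min_eq_right hlt.le]
          rw [wExt, dif_pos (lapIdx_lt p _ _ hlt q.1.isLt)]
        have hinj : ∀ q1 ∈ (univ : Finset (Fin p × Fin p)).filter
            (fun q => (q.2 : ℕ) < (q.1 : ℕ)), ∀ q2 ∈ (univ : Finset (Fin p × Fin p)).filter
            (fun q => (q.2 : ℕ) < (q.1 : ℕ)), e q1 = e q2 → q1 = q2 := by
          intro q1 hq1 q2 hq2 heq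
          have h1 : (q1.2 : ℕ) < (q1.1 : ℕ) := (Finset.mem_filter.mp hq1).2
          have h2 : (q2.2 : ℕ) < (q2.1 : ℕ) := (Finset.mem_filter.mp hq2).2
          simp only [he, dif_pos h1, dif_pos h2, Fin.mk.injEq] at heq
          obtain ⟨ha, hb⟩ := lapIdx_inj p h1 q1.1.isLt h2 q2.1.isLt heq
          exact Prod.ext (Fin.ext ha) (Fin.ext hb)
        rw [hstep, Finset.sum_congr rfl hterm]
        calc ∑ q ∈ (univ : Finset (Fin p × Fin p)).filter
              (fun q => (q.2 : ℕ) < (q.1 : ℕ)), (x (e q)) ^ 2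
            = ∑ k ∈ Finset.image e ((univ : Finset (Fin p × Fin p)).filter
              (fun q => (q.2 : ℕ) < (q.1 : ℕ))), (x k) ^ 2 := (Finset.sum_image (f := fun k => (x k) ^ 2) hinj).symm
          _ ≤ ∑ k, (x k) ^ 2 :=
              Finset.sum_le_sum_of_subset_of_nonneg (Finset.subset_univ _)
                (fun _ _ _ => sq_nonneg _)
          _ = 1 := hxsum
      calc ∑ i, A i = ∑ i, ((∑ j, G i j) + (∑ j, H i j)) :=
            Finset.sum_congr rfl fun i _ => hAi i
        _ = (∑ i, ∑ j, G i j) + (∑ i, ∑ j, H i j) := Finset.sum_add_distrib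
        _ = 2 * (∑ i, ∑ j, G i j) := by rw [hHG]; ring
        _ ≤ 2 * 1 := by
            have := hGbound
            linarith
        _ = 2 := by ring
    calc ∑ i, ∑ j, (Lop p x i j) ^ 2
        ≤ ∑ i, (((p - 1 : ℕ) : ℝ) + 1) * A i := Finset.sum_le_sum fun i _ => hrow i
      _ = ((((p - 1 : ℕ) : ℝ)) + 1) * ∑ i, A i := by rw [Finset.mul_sum]
      _ = (p : ℝ) * ∑ i, A i := by rw [hQ]
      _ ≤ (p : ℝ) * 2 := by
          have hp0 : (0 : ℝ) ≤ (p : ℝ) := Nat.cast_nonneg p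
          nlinarith [hsumA]
      _ = 2 * p := by ring
end

section
/- The operator norm bound √(2p) of L is attained: there exists a nonzero w ∈ ℝ^{p(p-1)/2} with ‖Lw‖_F = √(2p)·‖w‖. -/
open Matrix Finset

/-- the operator norm bound `√(2p)` of `L` is attained by some
nonzero `w`: `‖Lw‖_F = √(2p)·‖w‖`. -/
theorem lop_norm_attained (p : ℕ) (hp : 2 ≤ p) :
    ∃ w : Fin (p * (p - 1) / 2) → ℝ, w ≠ 0 ∧
      Real.sqrt (∑ i : Fin p, ∑ j : Fin p, (Lop p w i j) ^ 2) =
        Real.sqrt (2 * p) * Real.sqrt (∑ k, (w k) ^ 2) := by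
  have hcard : 1 ≤ p * (p - 1) / 2 := by
    have : 2 ≤ p * (p - 1) := by nlinarith [Nat.sub_add_cancel (by omega : 1 ≤ p)]
    omega
  refine ⟨fun _ => 1, ?_, ?_⟩
  · intro h
    have := congrFun h ⟨0, by omega⟩
    simp at this
  · set w : Fin (p * (p - 1) / 2) → ℝ := fun _ => 1 with hw
    have hwx : ∀ i j : Fin p, i ≠ j →
        wExt p w (lapIdx p (max (i : ℕ) (j : ℕ)) (min (i : ℕ) (j : ℕ))) = 1 := by
      intro i j hij
      have h1 : (min (i : ℕ) (j : ℕ)) < max (i : ℕ) (j : ℕ) := by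
        rcases lt_or_gt_of_ne (fun h => hij (Fin.ext h)) with h | h <;> omega
      have h2 : max (i : ℕ) (j : ℕ) < p := by
        have := i.isLt; have := j.isLt; omega
      rw [wExt, dif_pos (lapIdx_lt p _ _ h1 h2)]
    have hLd : ∀ i : Fin p, Lop p w i i = ((p : ℝ) - 1) := by
      intro i
      rw [Lop, Matrix.of_apply, if_pos rfl]
      rw [Finset.sum_congr rfl (fun l hl => by
        rw [hwx i l (Ne.symm (Finset.mem_filter.mp hl).2)])]
      rw [Finset.sum_const, Finset.filter_ne', Finset.card_erase_of_mem (mem_univ i)]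
      simp only [Finset.card_univ, Fintype.card_fin, nsmul_eq_mul, mul_one]
      rw [Nat.cast_sub (by omega : 1 ≤ p)]; norm_num
    have hLo : ∀ i j : Fin p, i ≠ j → Lop p w i j = -1 := by
      intro i j hij
      rw [Lop, Matrix.of_apply, if_neg hij, hwx i j hij]
    have hrow : ∀ i : Fin p, ∑ j : Fin p, (Lop p w i j) ^ 2
        = ((p : ℝ) - 1) + ((p : ℝ) - 1) ^ 2 := by
      intro i
      rw [← Finset.sum_erase_add _ _ (mem_univ i), hLd i]
      congr 1
      rw [Finset.sum_congr rfl (fun j hj => by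
        rw [hLo i j (Ne.symm (Finset.mem_erase.mp hj).1)]),
        Finset.sum_const, Finset.card_erase_of_mem (mem_univ i)]
      simp only [Finset.card_univ, Fintype.card_fin, nsmul_eq_mul]
      rw [Nat.cast_sub (by omega : 1 ≤ p)]; norm_num
    rw [Finset.sum_congr rfl (fun i _ => hrow i), Finset.sum_const,
      Finset.card_univ, Fintype.card_fin, nsmul_eq_mul]
    have hsum2 : ∑ k : Fin (p * (p - 1) / 2), (w k) ^ 2 = ((p * (p - 1) / 2 : ℕ) : ℝ) := by
      simp [hw]
    rw [hsum2, ← Real.sqrt_mul (by positivity)]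
    congr 1
    have hy : 2 ∣ p * (p - 1) := by
      rcases Nat.even_or_odd p with ⟨a, ha⟩ | ⟨a, ha⟩
      · exact ⟨a * (p - 1), by rw [ha]; ring⟩
      · have h1 : p - 1 = 2 * a := by omega
        exact ⟨p * a, by rw [h1]; ring⟩
    obtain ⟨n, hn⟩ := hy
    have hn' : p * (p - 1) / 2 = n := by omega
    rw [hn']
    have hnR : 2 * (n : ℝ) = (p : ℝ) * ((p : ℝ) - 1) := by
      have := congrArg (fun x : ℕ => (x : ℝ)) hn
      push_cast [Nat.cast_sub (by omega : 1 ≤ p)] at this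
      linarith
    nlinarith [hnR]
end

section
/- Let A be a real symmetric p×p matrix with eigenvalues μ₁ ≤ ⋯ ≤ μ_p, and let λ₁ ≤ ⋯ ≤ λ_q (q ≤ p) be fixed positive reals. Then the maximum over p×q matrices U with UᵀU = I_q of tr(UᵀAU Diag(λ)) equals ∑_{i=1}^q λ_i μ_{p-q+i}, attained by taking the columns of U to be orthonormal eigenvectors of A corresponding to μ_{p-q+1}, …, μ_p in that order. -/
open Matrix Finset

/-- Rearrangement bound: if `0 ≤ r ≤ 1` on `range p` with total sum `m`, and `μ'` is
monotone below `p`, then `∑ μ' i * r i` is at most the sum of the top `m` values. -/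
lemma sgl_L1 (p m : ℕ) (hm : m ≤ p) (μ' : ℕ → ℝ)
    (hμ : ∀ a b, a ≤ b → b < p → μ' a ≤ μ' b) (r : ℕ → ℝ)
    (hr0 : ∀ i, i < p → 0 ≤ r i) (hr1 : ∀ i, i < p → r i ≤ 1)
    (hsum : ∑ i ∈ range p, r i = m) :
    ∑ i ∈ range p, μ' i * r i ≤ ∑ j ∈ range m, μ' (p - m + j) := by
  rcases Nat.eq_zero_or_pos m with hm0 | hm1
  · subst hm0
    simp only [range_zero, sum_empty]
    have hz : ∀ i ∈ range p, r i = 0 := fun i hi =>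
      (Finset.sum_eq_zero_iff_of_nonneg (fun i hi => hr0 i (mem_range.mp hi))).mp
        (by simpa using hsum) i hi
    have : ∑ i ∈ range p, μ' i * r i = 0 :=
      Finset.sum_eq_zero (fun i hi => by rw [hz i hi]; ring)
    linarith
  · have hp1 : p - m < p := by omega
    set c : ℝ := μ' (p - m) with hc
    have hsplit : range p = Finset.Ico 0 (p - m) ∪ Finset.Ico (p - m) p := by
      rw [Finset.range_eq_Ico]
      exact (Finset.Ico_union_Ico_eq_Ico (by omega) (by omega)).symm
    have hdisj : Disjoint (Finset.Ico 0 (p-m)) (Finset.Ico (p-m) p) :=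
      Finset.Ico_disjoint_Ico_consecutive 0 (p-m) p
    have hsum2 : ∀ f : ℕ → ℝ, ∑ i ∈ range p, f i
        = ∑ i ∈ Finset.Ico 0 (p-m), f i + ∑ i ∈ Finset.Ico (p-m) p, f i := by
      intro f; rw [hsplit, Finset.sum_union hdisj]
    have hRHS : ∑ j ∈ range m, μ' (p - m + j) = ∑ i ∈ Finset.Ico (p-m) p, μ' i := by
      rw [Finset.sum_Ico_eq_sum_range]
      have : p - (p - m) = m := by omega
      rw [this]
    have hmemlo : ∀ i ∈ Finset.Ico 0 (p-m), i < p := fun i hi => by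
      have := Finset.mem_Ico.mp hi; omega
    have hmemhi : ∀ i ∈ Finset.Ico (p-m) p, i < p ∧ p - m ≤ i := fun i hi => by
      have := Finset.mem_Ico.mp hi; omega
    have h1 : ∑ i ∈ Finset.Ico 0 (p-m), μ' i * r i ≤ c * ∑ i ∈ Finset.Ico 0 (p-m), r i := by
      rw [Finset.mul_sum]
      refine Finset.sum_le_sum (fun i hi => ?_)
      have hip := hmemlo i hi
      have : μ' i ≤ c := hμ i (p-m) (by have := Finset.mem_Ico.mp hi; omega) hp1
      exact mul_le_mul_of_nonneg_right this (hr0 i hip)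
    have h2 : c * ∑ i ∈ Finset.Ico (p-m) p, (1 - r i)
        ≤ ∑ i ∈ Finset.Ico (p-m) p, μ' i * (1 - r i) := by
      rw [Finset.mul_sum]
      refine Finset.sum_le_sum (fun i hi => ?_)
      obtain ⟨hip, hge⟩ := hmemhi i hi
      exact mul_le_mul_of_nonneg_right (hμ (p-m) i hge hip) (by linarith [hr1 i hip])
    have hcard : ((Finset.Ico (p-m) p).card : ℝ) = m := by
      rw [Nat.card_Ico]; norm_cast; omega
    have e1 : ∑ i ∈ Finset.Ico (p-m) p, (1 - r i)
        = m - ∑ i ∈ Finset.Ico (p-m) p, r i := by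
      rw [Finset.sum_sub_distrib, Finset.sum_const, nsmul_eq_mul, hcard]; ring
    have e2 : ∑ i ∈ Finset.Ico (p-m) p, μ' i * (1 - r i)
        = ∑ i ∈ Finset.Ico (p-m) p, μ' i - ∑ i ∈ Finset.Ico (p-m) p, μ' i * r i := by
      rw [← Finset.sum_sub_distrib]; exact Finset.sum_congr rfl (fun i _ => by ring)
    have e3 : ∑ i ∈ Finset.Ico 0 (p-m), r i + ∑ i ∈ Finset.Ico (p-m) p, r i = m := by
      rw [← hsum2]; exact hsum
    have e4 : c * (∑ i ∈ Finset.Ico 0 (p-m), r i + ∑ i ∈ Finset.Ico (p-m) p, r i)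
        = c * m := by rw [e3]
    have e5 := hsum2 (fun i => μ' i * r i)
    rw [hRHS]
    rw [e1, e2] at h2
    nlinarith [h1, h2, e4, e5]

/-- Swapping a triangular double sum. -/
lemma sgl_swap (n : ℕ) (F : ℕ → ℕ → ℝ) :
    ∑ j ∈ range n, ∑ k ∈ range (j+1), F k j
      = ∑ k ∈ range n, ∑ j ∈ Finset.Ico k n, F k j := by
  have h1 : ∑ j ∈ range n, ∑ k ∈ range (j+1), F k j
      = ∑ j ∈ range n, ∑ k ∈ range n, if k ≤ j then F k j else 0 := by
    refine sum_congr rfl (fun j hj => ?_)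
    have hj' := mem_range.mp hj
    rw [← Finset.sum_filter]
    congr 1
    ext k; simp only [mem_filter, mem_range]; omega
  rw [h1, Finset.sum_comm]
  refine sum_congr rfl (fun k hk => ?_)
  rw [← Finset.sum_filter]
  congr 1
  ext j; simp only [mem_filter, mem_range, Finset.mem_Ico]; omega

/-- Core combinatorial bound (Abel summation + rearrangement). -/
lemma sgl_core (p q : ℕ) (hq : q ≤ p) (μ' lam' : ℕ → ℝ)
    (hμ : ∀ a b, a ≤ b → b < p → μ' a ≤ μ' b)
    (hlam : ∀ a b, a ≤ b → b < q → lam' a ≤ lam' b)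
    (hpos : ∀ j, j < q → 0 ≤ lam' j)
    (s : ℕ → ℕ → ℝ) (hs0 : ∀ i j, 0 ≤ s i j)
    (hcol : ∀ j, j < q → ∑ i ∈ range p, s i j = 1)
    (hrow : ∀ i, i < p → ∑ j ∈ range q, s i j ≤ 1) :
    ∑ j ∈ range q, lam' j * ∑ i ∈ range p, μ' i * s i j
      ≤ ∑ j ∈ range q, lam' j * μ' (p - q + j) := by
  set f : ℕ → ℝ := fun n => if n = 0 then 0 else lam' (n-1) with hf
  have htel : ∀ j, lam' j = ∑ k ∈ range (j+1), (f (k+1) - f k) := by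
    intro j
    rw [Finset.sum_range_sub f (j+1)]
    simp [hf]
  have hd : ∀ k, k < q → 0 ≤ f (k+1) - f k := by
    intro k hk
    rcases Nat.eq_zero_or_pos k with h0 | h1
    · subst h0; simpa [hf] using hpos 0 hk
    · have : f (k+1) - f k = lam' k - lam' (k-1) := by
        simp [hf, Nat.pos_iff_ne_zero.mp h1]
      rw [this]
      have := hlam (k-1) k (by omega) hk
      linarith
  set cc : ℕ → ℝ := fun j => ∑ i ∈ range p, μ' i * s i j with hcc
  have step1 : ∑ j ∈ range q, lam' j * cc j
      = ∑ k ∈ range q, ∑ j ∈ Finset.Ico k q, (f (k+1) - f k) * cc j := by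
    rw [← sgl_swap q (fun k j => (f (k+1) - f k) * cc j)]
    refine sum_congr rfl (fun j hj => ?_)
    rw [htel j, Finset.sum_mul]
  have step2 : ∀ k, k < q → ∑ j ∈ Finset.Ico k q, cc j
      ≤ ∑ j ∈ Finset.Ico k q, μ' (p - q + j) := by
    intro k hk
    have hIsub : Finset.Ico k q ⊆ range q := by
      intro j hj; rw [mem_range]; exact (Finset.mem_Ico.mp hj).2
    set r : ℕ → ℝ := fun i => ∑ j ∈ Finset.Ico k q, s i j with hr
    have hswap : ∑ j ∈ Finset.Ico k q, cc j = ∑ i ∈ range p, μ' i * r i := by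
      simp only [hcc, hr, Finset.mul_sum]
      rw [Finset.sum_comm]
    have hr0 : ∀ i, i < p → 0 ≤ r i := fun i _ =>
      Finset.sum_nonneg (fun j _ => hs0 i j)
    have hr1 : ∀ i, i < p → r i ≤ 1 := by
      intro i hi
      calc r i ≤ ∑ j ∈ range q, s i j :=
            Finset.sum_le_sum_of_subset_of_nonneg hIsub (fun j _ _ => hs0 i j)
        _ ≤ 1 := hrow i hi
    have hrsum : ∑ i ∈ range p, r i = (q - k : ℕ) := by
      rw [Finset.sum_comm]
      rw [Finset.sum_congr rfl (fun j hj => hcol j ((Finset.mem_Ico.mp hj).2))]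
      simp [Nat.card_Ico]
    have := sgl_L1 p (q - k) (by omega) μ' hμ r hr0 hr1 hrsum
    rw [hswap]
    refine le_trans this (le_of_eq ?_)
    rw [Finset.sum_Ico_eq_sum_range]
    refine sum_congr rfl (fun t ht => ?_)
    congr 1
    omega
  calc ∑ j ∈ range q, lam' j * cc j
      = ∑ k ∈ range q, (f (k+1) - f k) * ∑ j ∈ Finset.Ico k q, cc j := by
        rw [step1]; exact sum_congr rfl (fun k _ => by rw [Finset.mul_sum])
    _ ≤ ∑ k ∈ range q, (f (k+1) - f k) * ∑ j ∈ Finset.Ico k q, μ' (p - q + j) := by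
        refine Finset.sum_le_sum (fun k hk => ?_)
        exact mul_le_mul_of_nonneg_left (step2 k (mem_range.mp hk)) (hd k (mem_range.mp hk))
    _ = ∑ k ∈ range q, ∑ j ∈ Finset.Ico k q, (f (k+1) - f k) * μ' (p - q + j) := by
        exact sum_congr rfl (fun k _ => by rw [Finset.mul_sum])
    _ = ∑ j ∈ range q, ∑ k ∈ range (j+1), (f (k+1) - f k) * μ' (p - q + j) := by
        rw [sgl_swap q (fun k j => (f (k+1) - f k) * μ' (p - q + j))]
    _ = ∑ j ∈ range q, lam' j * μ' (p - q + j) := by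
        refine sum_congr rfl (fun j _ => ?_)
        rw [htel j, Finset.sum_mul]

/-- The trace objective in terms of `W = Vᵀ U`. -/
lemma sgl_trace (p q : ℕ) (A V : Matrix (Fin p) (Fin p) ℝ) (μ : Fin p → ℝ)
    (lam : Fin q → ℝ)
    (hA : A = V * Matrix.diagonal μ * Vᵀ) (U : Matrix (Fin p) (Fin q) ℝ) :
    Matrix.trace (Uᵀ * A * U * Matrix.diagonal lam)
      = ∑ j : Fin q, lam j * ∑ i : Fin p, μ i * ((Vᵀ*U) i j)^2 := by
  have hM : Uᵀ * A * U * Matrix.diagonal lam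
      = (Vᵀ*U)ᵀ * (Matrix.diagonal μ * (Vᵀ*U)) * Matrix.diagonal lam := by
    rw [hA, Matrix.transpose_mul, Matrix.transpose_transpose]
    simp only [Matrix.mul_assoc]
  rw [hM]
  set W := Vᵀ * U with hW
  rw [Matrix.trace]
  simp only [Matrix.diag_apply, Matrix.mul_diagonal]
  simp only [Matrix.mul_apply, Matrix.transpose_apply, Matrix.diagonal_apply,
    ite_mul, zero_mul, Finset.sum_ite_eq, Finset.mem_univ, if_true]
  refine Finset.sum_congr rfl (fun j _ => ?_)
  rw [Finset.mul_sum, Finset.sum_mul]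
  refine Finset.sum_congr rfl (fun i _ => ?_)
  ring


/-- for a real symmetric `A = V Diag(μ) Vᵀ` with orthogonal `V`
and eigenvalues `μ₁ ≤ ⋯ ≤ μ_p`, and fixed positive `λ₁ ≤ ⋯ ≤ λ_q` (q ≤ p),
the maximum of `tr(Uᵀ A U Diag(λ))` over `p×q` matrices with `UᵀU = I_q`
equals `∑ᵢ λᵢ μ_{p-q+i}`, attained by the matrix whose columns are the
orthonormal eigenvectors of `A` for `μ_{p-q+1}, …, μ_p` (the last `q`
columns of `V`). -/
theorem trace_maximization_over_stiefel (p q : ℕ) (hq : q ≤ p)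
    (A V : Matrix (Fin p) (Fin p) ℝ) (μ : Fin p → ℝ) (lam : Fin q → ℝ)
    (hV : Vᵀ * V = 1) (hA : A = V * Matrix.diagonal μ * Vᵀ)
    (hμ : Monotone μ) (hlam : Monotone lam) (hpos : ∀ i, 0 < lam i) :
    let U0 : Matrix (Fin p) (Fin q) ℝ :=
      Matrix.of fun (i : Fin p) (j : Fin q) => V i ⟨p - q + (j : ℕ), by omega⟩
    IsGreatest
      {r : ℝ | ∃ U : Matrix (Fin p) (Fin q) ℝ,
        Uᵀ * U = 1 ∧ r = Matrix.trace (Uᵀ * A * U * Matrix.diagonal lam)}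
      (∑ i : Fin q, lam i * μ ⟨p - q + (i : ℕ), by omega⟩) ∧
    Matrix.trace (U0ᵀ * A * U0 * Matrix.diagonal lam) =
      ∑ i : Fin q, lam i * μ ⟨p - q + (i : ℕ), by omega⟩ := by
  intro U0
  -- entrywise orthonormality of the columns of V
  have hVe : ∀ i i' : Fin p, ∑ a : Fin p, V a i * V a i' = if i = i' then (1:ℝ) else 0 := by
    intro i i'
    have := congrFun (congrFun hV i) i'
    simpa [Matrix.mul_apply, Matrix.one_apply, Matrix.transpose_apply] using this
  -- U0 has orthonormal columns
  have hU0 : U0ᵀ * U0 = 1 := by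
    ext j j'
    simp only [Matrix.mul_apply, Matrix.transpose_apply, Matrix.one_apply, U0, Matrix.of_apply]
    rw [hVe]
    congr 1
    simp only [eq_iff_iff, Fin.mk.injEq, Fin.ext_iff]
    omega
  -- trace at U0 equals the claimed value
  have hW0 : ∀ (i : Fin p) (j : Fin q),
      (Vᵀ * U0) i j = if i = ⟨p - q + (j : ℕ), by omega⟩ then (1:ℝ) else 0 := by
    intro i j
    simp only [Matrix.mul_apply, Matrix.transpose_apply, U0, Matrix.of_apply]
    rw [hVe]
  have htr0 : Matrix.trace (U0ᵀ * A * U0 * Matrix.diagonal lam)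
      = ∑ i : Fin q, lam i * μ ⟨p - q + (i : ℕ), by omega⟩ := by
    rw [sgl_trace p q A V μ lam hA U0]
    refine Finset.sum_congr rfl (fun j _ => ?_)
    congr 1
    have : ∀ i : Fin p, μ i * ((Vᵀ * U0) i j)^2
        = if (⟨p - q + (j : ℕ), by omega⟩ : Fin p) = i then μ i else 0 := by
      intro i
      rw [hW0 i j]
      by_cases h : i = (⟨p - q + (j : ℕ), by omega⟩ : Fin p)
      · simp [h]
      · simp [h, Ne.symm h]
    rw [Finset.sum_congr rfl (fun i _ => this i), Finset.sum_ite_eq]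
    simp
  refine ⟨⟨⟨U0, hU0, htr0.symm⟩, ?_⟩, htr0⟩
  -- upper bound
  rintro x ⟨U, hU, rfl⟩
  rw [sgl_trace p q A V μ lam hA U]
  set W := Vᵀ * U with hWdef
  -- column sums of squares equal 1
  have hVVt : V * Vᵀ = 1 := mul_eq_one_comm.mp hV
  have hWtW : Wᵀ * W = 1 := by
    have : Wᵀ * W = Uᵀ * (V * Vᵀ) * U := by
      rw [hWdef, Matrix.transpose_mul, Matrix.transpose_transpose]
      simp only [Matrix.mul_assoc]
    rw [this, hVVt, Matrix.mul_one, hU]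
  have hcol : ∀ j : Fin q, ∑ i : Fin p, (W i j)^2 = 1 := by
    intro j
    have := congrFun (congrFun hWtW j) j
    simp only [Matrix.mul_apply, Matrix.transpose_apply, Matrix.one_apply_eq] at this
    calc ∑ i : Fin p, (W i j)^2 = ∑ i : Fin p, W i j * W i j := by
          exact Finset.sum_congr rfl (fun i _ => pow_two (W i j))
      _ = 1 := this
  -- row sums of squares at most 1
  have hrow : ∀ i : Fin p, ∑ j : Fin q, (W i j)^2 ≤ 1 := by
    intro i
    set P := W * Wᵀ with hPdef
    have hPP : P * P = P := by
      rw [hPdef, Matrix.mul_assoc, ← Matrix.mul_assoc Wᵀ W Wᵀ, hWtW, Matrix.one_mul]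
    have hPsym : ∀ k : Fin p, P k i = P i k := by
      intro k
      simp only [hPdef, Matrix.mul_apply, Matrix.transpose_apply]
      exact Finset.sum_congr rfl (fun j _ => mul_comm _ _)
    have hPdiag : P i i = ∑ j : Fin q, (W i j)^2 := by
      simp only [hPdef, Matrix.mul_apply, Matrix.transpose_apply]
      exact Finset.sum_congr rfl (fun j _ => (pow_two (W i j)).symm)
    have hPii : P i i = ∑ k : Fin p, (P i k)^2 := by
      have := congrFun (congrFun hPP i) i
      rw [Matrix.mul_apply] at this
      rw [← this]
      exact Finset.sum_congr rfl (fun k _ => by rw [hPsym k]; ring)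
    have hge : (P i i)^2 ≤ ∑ k : Fin p, (P i k)^2 := by
      exact Finset.single_le_sum (f := fun k => (P i k)^2) (fun k _ => sq_nonneg _) (Finset.mem_univ i)
    have hnn : 0 ≤ P i i := by
      rw [hPdiag]; exact Finset.sum_nonneg (fun j _ => sq_nonneg _)
    have hle1 : P i i ≤ 1 := by nlinarith [hPii, hge]
    rw [← hPdiag]; exact hle1
  -- convert to ℕ-indexed sums and apply the core bound
  set μ' : ℕ → ℝ := fun n => if h : n < p then μ ⟨n, h⟩ else 0 with hμ'
  set lam' : ℕ → ℝ := fun n => if h : n < q then lam ⟨n, h⟩ else 0 with hlam'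
  set s' : ℕ → ℕ → ℝ := fun i j =>
    if h : i < p ∧ j < q then (W ⟨i, h.1⟩ ⟨j, h.2⟩)^2 else 0 with hs'
  have hμ'' : ∀ a b, a ≤ b → b < p → μ' a ≤ μ' b := by
    intro a b hab hb
    simp only [hμ']
    rw [dif_pos (lt_of_le_of_lt hab hb), dif_pos hb]
    exact hμ (by exact hab)
  have hlam'' : ∀ a b, a ≤ b → b < q → lam' a ≤ lam' b := by
    intro a b hab hb
    simp only [hlam']
    rw [dif_pos (lt_of_le_of_lt hab hb), dif_pos hb]
    exact hlam (by exact hab)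
  have hpos' : ∀ j, j < q → 0 ≤ lam' j := by
    intro j hj
    simp only [hlam']
    rw [dif_pos hj]
    exact (hpos _).le
  have hs0' : ∀ i j, 0 ≤ s' i j := by
    intro i j
    simp only [hs']
    split
    · exact sq_nonneg _
    · exact le_refl 0
  have hcol' : ∀ j, j < q → ∑ i ∈ range p, s' i j = 1 := by
    intro j hj
    rw [← Fin.sum_univ_eq_sum_range (fun i => s' i j) p]
    rw [← hcol ⟨j, hj⟩]
    refine Finset.sum_congr rfl (fun i _ => ?_)
    simp only [hs']
    rw [dif_pos ⟨i.isLt, hj⟩]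
  have hrow' : ∀ i, i < p → ∑ j ∈ range q, s' i j ≤ 1 := by
    intro i hi
    rw [← Fin.sum_univ_eq_sum_range (fun j => s' i j) q]
    refine le_trans (le_of_eq ?_) (hrow ⟨i, hi⟩)
    refine Finset.sum_congr rfl (fun j _ => ?_)
    simp only [hs']
    rw [dif_pos ⟨hi, j.isLt⟩]
  have hcore := sgl_core p q hq μ' lam' hμ'' hlam'' hpos' s' hs0' hcol' hrow'
  have hLHS : ∑ j : Fin q, lam j * ∑ i : Fin p, μ i * (W i j)^2
      = ∑ j ∈ range q, lam' j * ∑ i ∈ range p, μ' i * s' i j := by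
    rw [← Fin.sum_univ_eq_sum_range (fun j => lam' j * ∑ i ∈ range p, μ' i * s' i j) q]
    refine Finset.sum_congr rfl (fun j _ => ?_)
    simp only [hlam']
    rw [dif_pos j.isLt]
    congr 1
    rw [← Fin.sum_univ_eq_sum_range (fun i => μ' i * s' i j) p]
    refine Finset.sum_congr rfl (fun i _ => ?_)
    simp only [hμ', hs']
    rw [dif_pos i.isLt, dif_pos ⟨i.isLt, j.isLt⟩]
  have hRHS : ∑ j ∈ range q, lam' j * μ' (p - q + j)
      = ∑ i : Fin q, lam i * μ ⟨p - q + (i : ℕ), by omega⟩ := by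
    rw [← Fin.sum_univ_eq_sum_range (fun j => lam' j * μ' (p - q + j)) q]
    refine Finset.sum_congr rfl (fun j _ => ?_)
    simp only [hlam', hμ']
    rw [dif_pos j.isLt, dif_pos (show p - q + (j : ℕ) < p by omega)]
  rw [hLHS, ← hRHS]
  exact hcore
end
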